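/- Every closed term over the signature {1, +, ·, ⁻¹} is provably equal, in the equational theory of inversive arithmetical meadows, to a term of the form n̲ · m̲⁻¹ with n, m positive natural numbers and gcd(n,m) = 1. -/

import Mathlib

/-! A closed term denotes a positive rational `q`, computed by reading `1, +, ·, ⁻¹` in `ℚ`.
By induction on the term, it is provably equal to `n̲ · m̲⁻¹` for *every* pair of positive `n, m`
with `n / m = q`: the meadow axioms prove the usual rules of fraction arithmetic
for such quotients, including `(k n)̲ · (k m)̲⁻¹ = n̲ · m̲⁻¹`, which makes the quotient
depend only on the ratio `n / m`. Taking `q` in lowest terms gives the normal form. -/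

structure IAMeadow (M : Type*) where
  add : M → M → M
  mul : M → M → M
  one : M
  inv : M → M
  add_assoc : ∀ x y z, add (add x y) z = add x (add y z)
  add_comm : ∀ x y, add x y = add y x
  mul_assoc : ∀ x y z, mul (mul x y) z = mul x (mul y z)
  mul_comm : ∀ x y, mul x y = mul y x
  mul_one : ∀ x, mul x one = x
  mul_add : ∀ x y z, mul x (add y z) = add (mul x y) (mul x z)
  mul_inv : ∀ x, mul x (inv x) = one

def IAMeadow.numeral {M : Type*} (A : IAMeadow M) : ℕ → M
  | 0 => A.one
  | 1 => A.one
  | n + 2 => A.add (A.numeral (n + 1)) A.one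

inductive CTerm : Type
  | one : CTerm
  | add : CTerm → CTerm → CTerm
  | mul : CTerm → CTerm → CTerm
  | inv : CTerm → CTerm

def CTerm.eval {M : Type*} (A : IAMeadow M) : CTerm → M
  | .one => A.one
  | .add s t => A.add (s.eval A) (t.eval A)
  | .mul s t => A.mul (s.eval A) (t.eval A)
  | .inv t => A.inv (t.eval A)

namespace IAMeadow

variable {M : Type*} (A : IAMeadow M)

local instance : Std.Associative A.mul := ⟨A.mul_assoc⟩
local instance : Std.Commutative A.mul := ⟨A.mul_comm⟩

theorem one_mul (x : M) : A.mul A.one x = x := by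
  rw [A.mul_comm, A.mul_one]

theorem mul_inv_mul_cancel_left (c a b : M) :
    A.mul (A.mul c a) (A.inv (A.mul c b)) = A.mul a (A.inv b) :=
  calc A.mul (A.mul c a) (A.inv (A.mul c b))
      = A.mul (A.mul (A.mul c a) (A.inv (A.mul c b))) (A.mul b (A.inv b)) := by
        rw [A.mul_inv, A.mul_one]
    _ = A.mul (A.mul (A.mul c b) (A.inv (A.mul c b))) (A.mul a (A.inv b)) := by ac_rfl
    _ = A.mul a (A.inv b) := by rw [A.mul_inv, A.one_mul]

theorem inv_mul_inv (a b : M) : A.inv (A.mul a (A.inv b)) = A.mul b (A.inv a) :=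
  calc A.inv (A.mul a (A.inv b))
      = A.mul (A.mul (A.inv (A.mul a (A.inv b))) (A.mul a (A.inv a)))
          (A.mul b (A.inv b)) := by
        rw [A.mul_inv a, A.mul_inv b, A.mul_one, A.mul_one]
    _ = A.mul (A.mul (A.mul a (A.inv b)) (A.inv (A.mul a (A.inv b))))
          (A.mul b (A.inv a)) := by ac_rfl
    _ = A.mul b (A.inv a) := by rw [A.mul_inv, A.one_mul]

theorem mul_inv_mul_mul_inv (a b c d : M) :
    A.mul (A.mul a (A.inv b)) (A.mul c (A.inv d)) =
      A.mul (A.mul a c) (A.inv (A.mul b d)) :=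
  calc A.mul (A.mul a (A.inv b)) (A.mul c (A.inv d))
      = A.mul (A.mul (A.mul a (A.inv b)) (A.mul c (A.inv d)))
          (A.mul (A.mul b d) (A.inv (A.mul b d))) := by rw [A.mul_inv, A.mul_one]
    _ = A.mul (A.mul (A.mul b (A.inv b)) (A.mul d (A.inv d)))
          (A.mul (A.mul a c) (A.inv (A.mul b d))) := by ac_rfl
    _ = A.mul (A.mul a c) (A.inv (A.mul b d)) := by
        rw [A.mul_inv b, A.mul_inv d, A.mul_one, A.one_mul]

theorem add_mul_right (a b c : M) : A.mul (A.add a b) c = A.add (A.mul a c) (A.mul b c) := by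
  rw [A.mul_comm, A.mul_add, A.mul_comm c, A.mul_comm c]

/-! Since `numeral 0 = 1`, the numeral lemmas below hold only for positive arguments. -/

theorem numeral_succ {n : ℕ} (hn : 0 < n) :
    A.numeral (n + 1) = A.add (A.numeral n) A.one := by
  obtain ⟨k, rfl⟩ := Nat.exists_eq_add_of_lt hn
  rfl

theorem numeral_add {n m : ℕ} (hn : 0 < n) (hm : 0 < m) :
    A.numeral (n + m) = A.add (A.numeral n) (A.numeral m) := by
  induction m with
  | zero => omega
  | succ m ih =>
    rcases Nat.eq_zero_or_pos m with rfl | hm'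
    · exact A.numeral_succ hn
    · rw [← Nat.add_assoc, A.numeral_succ (by omega), ih hm', A.numeral_succ hm',
        A.add_assoc]

theorem numeral_mul {n m : ℕ} (hn : 0 < n) (hm : 0 < m) :
    A.numeral (n * m) = A.mul (A.numeral n) (A.numeral m) := by
  induction m with
  | zero => omega
  | succ m ih =>
    rcases Nat.eq_zero_or_pos m with rfl | hm'
    · rw [Nat.mul_one]
      exact (A.mul_one _).symm
    · rw [Nat.mul_succ, A.numeral_add (by positivity) hn, ih hm', A.numeral_succ hm',
        A.mul_add, A.mul_one]

def frac (n m : ℕ) : M := A.mul (A.numeral n) (A.inv (A.numeral m))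

theorem one_eq_frac_one_one : A.one = A.frac 1 1 :=
  (A.mul_inv A.one).symm

theorem frac_mul_mul_left {k n m : ℕ} (hk : 0 < k) (hn : 0 < n) (hm : 0 < m) :
    A.frac (k * n) (k * m) = A.frac n m := by
  rw [frac, A.numeral_mul hk hn, A.numeral_mul hk hm, A.mul_inv_mul_cancel_left]; rfl

theorem frac_eq_frac {n m n' m' : ℕ} (hn : 0 < n) (hm : 0 < m) (hn' : 0 < n') (hm' : 0 < m')
    (h : n * m' = n' * m) : A.frac n m = A.frac n' m' := by
  rw [← A.frac_mul_mul_left hm' hn hm, ← A.frac_mul_mul_left hm hn' hm', Nat.mul_comm m' n, h,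
    Nat.mul_comm n' m, Nat.mul_comm m' m]

theorem frac_add_frac {n₁ m₁ n₂ m₂ : ℕ} (hn₁ : 0 < n₁) (hm₁ : 0 < m₁) (hn₂ : 0 < n₂)
    (hm₂ : 0 < m₂) :
    A.add (A.frac n₁ m₁) (A.frac n₂ m₂) = A.frac (n₁ * m₂ + n₂ * m₁) (m₁ * m₂) := by
  rw [← A.frac_mul_mul_left hm₂ hn₁ hm₁, ← A.frac_mul_mul_left hm₁ hn₂ hm₂, Nat.mul_comm m₂ m₁,
    frac, frac, frac, ← add_mul_right, ← A.numeral_add (by positivity) (by positivity),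
    Nat.mul_comm m₂ n₁, Nat.mul_comm m₁ n₂]

theorem frac_mul_frac {n₁ m₁ n₂ m₂ : ℕ} (hn₁ : 0 < n₁) (hm₁ : 0 < m₁) (hn₂ : 0 < n₂)
    (hm₂ : 0 < m₂) :
    A.mul (A.frac n₁ m₁) (A.frac n₂ m₂) = A.frac (n₁ * n₂) (m₁ * m₂) := by
  rw [frac, frac, frac, A.mul_inv_mul_mul_inv, A.numeral_mul hn₁ hn₂, A.numeral_mul hm₁ hm₂]

theorem inv_frac (n m : ℕ) : A.inv (A.frac n m) = A.frac m n :=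
  A.inv_mul_inv _ _

end IAMeadow

theorem Rat.exists_coprime_div_eq_of_pos {q : ℚ} (hq : 0 < q) :
    ∃ n m : ℕ, 0 < n ∧ 0 < m ∧ Nat.gcd n m = 1 ∧ (n : ℚ) / m = q := by
  refine ⟨q.num.natAbs, q.den, Int.natAbs_pos.mpr (Rat.num_ne_zero.mpr hq.ne'), q.den_pos, q.reduced, ?_⟩
  rw [Nat.cast_natAbs, abs_of_pos (Rat.num_pos.mpr hq)]
  exact_mod_cast q.num_div_den

namespace CTerm

def value : CTerm → ℚ
  | .one => 1
  | .add s t => s.value + t.value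
  | .mul s t => s.value * t.value
  | .inv t => t.value⁻¹

theorem value_pos : ∀ t : CTerm, 0 < t.value
  | .one => one_pos
  | .add s t => add_pos s.value_pos t.value_pos
  | .mul s t => mul_pos s.value_pos t.value_pos
  | .inv t => inv_pos.mpr t.value_pos

theorem eval_eq_frac {M : Type*} (A : IAMeadow M) (t : CTerm) {n m : ℕ} (hn : 0 < n)
    (hm : 0 < m) (h : (n : ℚ) / m = t.value) : t.eval A = A.frac n m := by
  induction t generalizing n m with
  | one =>
    have hnm : n = m := by exact_mod_cast (div_eq_one_iff_eq (by positivity)).mp h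
    exact A.one_eq_frac_one_one.trans (A.frac_eq_frac one_pos one_pos hn hm (by omega))
  | add s t ihs iht =>
    obtain ⟨n₁, m₁, hn₁, hm₁, -, h₁⟩ := Rat.exists_coprime_div_eq_of_pos s.value_pos
    obtain ⟨n₂, m₂, hn₂, hm₂, -, h₂⟩ := Rat.exists_coprime_div_eq_of_pos t.value_pos
    have hsum : (n₁ * m₂ + n₂ * m₁) * m = n * (m₁ * m₂) := by
      simp only [value] at h
      rw [← h₁, ← h₂, div_add_div _ _ (by positivity) (by positivity),
        div_eq_div_iff (by positivity) (by positivity)] at h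
      qify
      linear_combination -h
    rw [eval, ihs hn₁ hm₁ h₁, iht hn₂ hm₂ h₂, A.frac_add_frac hn₁ hm₁ hn₂ hm₂]
    exact A.frac_eq_frac (by positivity) (by positivity) hn hm hsum
  | mul s t ihs iht =>
    obtain ⟨n₁, m₁, hn₁, hm₁, -, h₁⟩ := Rat.exists_coprime_div_eq_of_pos s.value_pos
    obtain ⟨n₂, m₂, hn₂, hm₂, -, h₂⟩ := Rat.exists_coprime_div_eq_of_pos t.value_pos
    have hprod : (n₁ * n₂) * m = n * (m₁ * m₂) := by
      simp only [value] at h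
      rw [← h₁, ← h₂, div_mul_div_comm, div_eq_div_iff (by positivity) (by positivity)] at h
      exact_mod_cast h.symm
    rw [eval, ihs hn₁ hm₁ h₁, iht hn₂ hm₂ h₂, A.frac_mul_frac hn₁ hm₁ hn₂ hm₂]
    exact A.frac_eq_frac (by positivity) (by positivity) hn hm hprod
  | inv s ih =>
    rw [eval, ih hm hn (by rw [← inv_div, h]; exact inv_inv s.value), A.inv_frac]

end CTerm

theorem closed_term_normal_form (t : CTerm) :
    ∃ n m : ℕ, 0 < n ∧ 0 < m ∧ Nat.gcd n m = 1 ∧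
      ∀ (M : Type) (A : IAMeadow M),
        t.eval A = A.mul (A.numeral n) (A.inv (A.numeral m)) := by
  obtain ⟨n, m, hn, hm, hcop, hq⟩ := Rat.exists_coprime_div_eq_of_pos t.value_pos
  exact ⟨n, m, hn, hm, hcop, fun M A => t.eval_eq_frac A hn hm hq⟩
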